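/- Let d ≥ 1 be an integer and let W be a set of w edges of the complete tripartite graph K_{d,d,d}. If w ≥ 2d², then the number of triangles of K_{d,d,d} all three of whose edges belong to W is at least d·(w − 2d²). -/

import Mathlib

open scoped Classical
open Finset Polynomial

noncomputable section

namespace PaperStmt

variable {V : Type}

/-- The degree of a vertex in a finite simple graph. -/
def degR [Fintype V] (G : SimpleGraph V) (v : V) : ℕ :=
  (Finset.univ.filter (fun u => G.Adj v u)).card

/-- The link of a vertex: the subgraph induced on the neighbor set. -/
def link (G : SimpleGraph V) (v : V) : SimpleGraph (G.neighborSet v) :=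
  SimpleGraph.induce (G.neighborSet v) G

/-- `G` is `(a,b)`-regular: `a`-regular, and the link of every vertex is `b`-regular. -/
def IsABRegular [Fintype V] (G : SimpleGraph V) (a b : ℕ) : Prop :=
  (∀ v, degR G v = a) ∧ ∀ v : V, ∀ u : G.neighborSet v, degR (link G v) u = b

/-- The adjacency matrix over `ℝ`. -/
def adjMat [Fintype V] (G : SimpleGraph V) : Matrix V V ℝ :=
  Matrix.of fun u v => if G.Adj u v then (1 : ℝ) else 0

/-- The eigenvalues of the adjacency matrix (with multiplicity), in decreasing order,
so that `λ_k = (eigList G).getD (k-1) 0`. -/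
def eigList [Fintype V] [DecidableEq V] (G : SimpleGraph V) : List ℝ :=
  (((adjMat G).charpoly.roots).sort (· ≤ ·)).reverse

/-- `λ₂(G)`, the second largest adjacency eigenvalue. -/
def lambda2 [Fintype V] [DecidableEq V] (G : SimpleGraph V) : ℝ :=
  (eigList G).getD 1 0

/-- `λ(G) = max_{i ≥ 2} |λ_i(G)|`. -/
def lambdaMax [Fintype V] [DecidableEq V] (G : SimpleGraph V) : ℝ :=
  (((eigList G).drop 1).map (fun x => |x|)).foldr max 0

/-- `H` is a `δ`-edge expander: every vertex set `U` has at least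
`δ · min(|U|, |Uᶜ|)` edges to its complement. -/
def IsEdgeExpander [Fintype V] (H : SimpleGraph V) (δ : ℝ) : Prop :=
  ∀ U : Finset V,
    δ * min (U.card : ℝ) (((Finset.univ \ U).card : ℝ)) ≤
      (((U ×ˢ (Finset.univ \ U)).filter (fun p => H.Adj p.1 p.2)).card : ℝ)

/-- The polygraph `G_S` on `V(G)^m`, `m = |S|`: two tuples are adjacent iff
their multiset of coordinatewise distances equals `S`. -/
def polygraph (G : SimpleGraph V) (S : Multiset ℕ) :
    SimpleGraph (Fin (Multiset.card S) → V) where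
  Adj x y := x ≠ y ∧
    Multiset.map (fun i => G.dist (x i) (y i)) (Finset.univ.val) = S
  symm := by
    refine ⟨?_⟩
    rintro x y ⟨hne, h⟩
    refine ⟨hne.symm, ?_⟩
    have hfun : (fun i => G.dist (y i) (x i)) = fun i => G.dist (x i) (y i) := by
      funext i; exact SimpleGraph.dist_comm
    rw [hfun]; exact h
  loopless := by refine ⟨?_⟩; rintro x ⟨h, -⟩; exact h rfl

/-- The number of vertices at distance `l` from a fixed vertex of the `d`-regular tree. -/
def Nd (d l : ℕ) : ℕ := if l = 0 then 1 else d * (d - 1) ^ (l - 1)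

/-- The multinomial coefficient `m!/(m₁!⋯m_k!)` attached to a multiset `S` of size `m`
whose distinct values have multiplicities `m₁,…,m_k`. -/
def multinom (S : Multiset ℕ) : ℕ :=
  (Multiset.card S).factorial / ∏ x ∈ S.toFinset, (S.count x).factorial

/-- The Geronimus polynomials (as functions), for parameter `d`. -/
def geronimus (d : ℕ) : ℕ → ℝ → ℝ
  | 0 => fun _ => 1
  | 1 => fun x => x
  | 2 => fun x => x ^ 2 - d
  | (t + 3) => fun x => x * geronimus d (t + 2) x - ((d : ℝ) - 1) * geronimus d (t + 1) x

/-- The graph on `L` where two distinct vertices are adjacent iff they have a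
common neighbor in `H`. -/
def commonNbrGraph {W : Type} (H : SimpleGraph W) (L : Set W) : SimpleGraph L where
  Adj x y := x ≠ y ∧ ∃ w : W, H.Adj x w ∧ H.Adj y w
  symm := by refine ⟨?_⟩; rintro x y ⟨hne, w, h1, h2⟩; exact ⟨hne.symm, w, h2, h1⟩
  loopless := by refine ⟨?_⟩; rintro x ⟨h, -⟩; exact h rfl

/-- `w : ℕ → V` describes a non-backtracking walk of length `t` in `G`
(only the values `w 0, …, w t` matter). -/
def IsNBWalk (G : SimpleGraph V) (t : ℕ) (w : ℕ → V) : Prop :=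
  (∀ i < t, G.Adj (w i) (w (i + 1))) ∧ ∀ i, 0 < i → i < t → w (i + 1) ≠ w (i - 1)

/-- The graph `H_t` on `V(G)` where distinct `u, v` are adjacent iff there is a
non-backtracking walk of length `t` from `u` to `v` in `G`. -/
def ntWalkGraph (G : SimpleGraph V) (t : ℕ) : SimpleGraph V :=
  SimpleGraph.fromRel (fun u v => ∃ w : ℕ → V, w 0 = u ∧ w t = v ∧ IsNBWalk G t w)

/-- The auxiliary graph on the edges of `H`: two distinct edges are adjacent iff
their union spans a triangle of `H`. -/
def auxGraph {X : Type} (H : SimpleGraph X) : SimpleGraph H.edgeSet where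
  Adj e f := e ≠ f ∧ ∃ x y z : X, H.Adj x y ∧ H.Adj x z ∧ H.Adj y z ∧
      ((e : Sym2 X) = s(x, y) ∨ (e : Sym2 X) = s(x, z) ∨ (e : Sym2 X) = s(y, z)) ∧
      ((f : Sym2 X) = s(x, y) ∨ (f : Sym2 X) = s(x, z) ∨ (f : Sym2 X) = s(y, z))
  symm := by
    refine ⟨?_⟩
    rintro e f ⟨hne, x, y, z, h1, h2, h3, he, hf⟩
    exact ⟨hne.symm, x, y, z, h1, h2, h3, hf, he⟩
  loopless := by refine ⟨?_⟩; rintro e ⟨h, -⟩; exact h rfl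

/-- The ordered triangles of a finite graph. -/
def triangleFinset {X : Type} [Fintype X] (H : SimpleGraph X) : Finset (X × X × X) :=
  Finset.univ.filter (fun t => H.Adj t.1 t.2.1 ∧ H.Adj t.1 t.2.2 ∧ H.Adj t.2.1 t.2.2)

/-- The complete tripartite graph `K_{d,d,d}`. -/
def tripartite (d : ℕ) : SimpleGraph (Fin 3 × Fin d) where
  Adj u v := u.1 ≠ v.1
  symm := ⟨fun _ _ h => Ne.symm h⟩
  loopless := ⟨fun _ h => h rfl⟩


variable {d : ℕ}

def emk (i j : Fin 3) (p : Fin d × Fin d) : Sym2 (Fin 3 × Fin d) :=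
  s((i, p.1), (j, p.2))

lemma emk_inj {i j : Fin 3} (hij : i ≠ j) : Function.Injective (emk (d := d) i j) := by
  intro p q h
  simp only [emk, Sym2.eq_iff, Prod.mk.injEq] at h
  rcases h with ⟨⟨-, h1⟩, -, h2⟩ | ⟨⟨h1, -⟩, -⟩
  · exact Prod.ext h1 h2
  · exact absurd h1 hij

lemma split_card (W : Finset (Sym2 (Fin 3 × Fin d)))
    (hW : ∀ e ∈ W, e ∈ (tripartite d).edgeSet) :
    W.card =
      (univ.filter (fun p : Fin d × Fin d => emk 0 1 p ∈ W)).card +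
      (univ.filter (fun p : Fin d × Fin d => emk 0 2 p ∈ W)).card +
      (univ.filter (fun p : Fin d × Fin d => emk 1 2 p ∈ W)).card := by
  classical
  set W01 := univ.filter (fun p : Fin d × Fin d => emk 0 1 p ∈ W) with hW01
  set W02 := univ.filter (fun p : Fin d × Fin d => emk 0 2 p ∈ W) with hW02
  set W12 := univ.filter (fun p : Fin d × Fin d => emk 1 2 p ∈ W) with hW12
  have himg : W = (W01.image (emk 0 1)) ∪ (W02.image (emk 0 2)) ∪ (W12.image (emk 1 2)) := by
    ext e
    simp only [mem_union, mem_image, hW01, hW02, hW12, mem_filter, mem_univ, true_and]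
    constructor
    · intro he
      have hE : e ∈ (tripartite d).edgeSet := hW e he
      induction e using Sym2.ind with
      | _ u v =>
        obtain ⟨i, x⟩ := u
        obtain ⟨j, y⟩ := v
        rw [SimpleGraph.mem_edgeSet] at hE
        fin_cases i <;> fin_cases j <;>
        first
          | exact absurd hE (not_not_intro rfl)
          | exact Or.inl (Or.inl ⟨(x, y), he, rfl⟩)
          | exact Or.inl (Or.inr ⟨(x, y), he, rfl⟩)
          | exact Or.inr ⟨(x, y), he, rfl⟩
          | exact Or.inl (Or.inl ⟨(y, x),
              by rw [show emk (d := d) 0 1 (y, x) = s(((1 : Fin 3), x), ((0 : Fin 3), y)) from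
                Sym2.eq_swap]; exact he, Sym2.eq_swap⟩)
          | exact Or.inl (Or.inr ⟨(y, x),
              by rw [show emk (d := d) 0 2 (y, x) = s(((2 : Fin 3), x), ((0 : Fin 3), y)) from
                Sym2.eq_swap]; exact he, Sym2.eq_swap⟩)
          | exact Or.inr ⟨(y, x),
              by rw [show emk (d := d) 1 2 (y, x) = s(((2 : Fin 3), x), ((1 : Fin 3), y)) from
                Sym2.eq_swap]; exact he, Sym2.eq_swap⟩
    · rintro ((⟨p, hp, rfl⟩ | ⟨p, hp, rfl⟩) | ⟨p, hp, rfl⟩) <;> exact hp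
  have d1 : Disjoint (W01.image (emk 0 1)) (W02.image (emk 0 2)) := by
    simp only [Finset.disjoint_left, mem_image]
    rintro e ⟨p, -, rfl⟩ ⟨q, -, h⟩
    simp [emk, Sym2.eq_iff, Prod.ext_iff] at h
  have d2 : Disjoint (W01.image (emk 0 1) ∪ W02.image (emk 0 2)) (W12.image (emk 1 2)) := by
    simp only [Finset.disjoint_left, mem_union, mem_image]
    rintro e (⟨p, -, rfl⟩ | ⟨p, -, rfl⟩) ⟨q, -, h⟩ <;>
      simp [emk, Sym2.eq_iff, Prod.ext_iff] at h
  rw [himg, card_union_of_disjoint d2, card_union_of_disjoint d1,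
    card_image_of_injective _ (emk_inj (by decide)),
    card_image_of_injective _ (emk_inj (by decide)),
    card_image_of_injective _ (emk_inj (by decide))]

-- direct approach per index pair instead of a general lemma
lemma cardA01 (W : Finset (Sym2 (Fin 3 × Fin d))) :
    (univ.filter (fun g : Fin 3 → Fin d =>
      s(((0 : Fin 3), g 0), ((1 : Fin 3), g 1)) ∈ W)).card =
    (univ.filter (fun p : Fin d × Fin d => emk 0 1 p ∈ W)).card * d := by
  classical
  rw [show (univ.filter (fun p : Fin d × Fin d => emk 0 1 p ∈ W)).card * d =
      ((univ.filter (fun p : Fin d × Fin d => emk 0 1 p ∈ W)) ×ˢ (univ : Finset (Fin d))).card by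
    rw [card_product, card_univ, Fintype.card_fin]]
  apply Finset.card_bij' (fun g _ => ((g 0, g 1), g 2)) (fun p _ => ![p.1.1, p.1.2, p.2])
  · intro g hg
    simp only [mem_filter, mem_univ, true_and] at hg
    simp only [mem_product, mem_filter, mem_univ, and_true, true_and, emk]
    exact mem_filter.mpr ⟨mem_univ _, hg⟩
  · intro p hp
    simp only [mem_product, mem_filter, mem_univ, true_and] at hp
    simpa [emk] using hp.1
  · intro g _
    funext k
    fin_cases k <;> simp
  · intro p _
    simp

lemma cardA02 (W : Finset (Sym2 (Fin 3 × Fin d))) :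
    (univ.filter (fun g : Fin 3 → Fin d =>
      s(((0 : Fin 3), g 0), ((2 : Fin 3), g 2)) ∈ W)).card =
    (univ.filter (fun p : Fin d × Fin d => emk 0 2 p ∈ W)).card * d := by
  classical
  rw [show (univ.filter (fun p : Fin d × Fin d => emk 0 2 p ∈ W)).card * d =
      ((univ.filter (fun p : Fin d × Fin d => emk 0 2 p ∈ W)) ×ˢ (univ : Finset (Fin d))).card by
    rw [card_product, card_univ, Fintype.card_fin]]
  apply Finset.card_bij' (fun g _ => ((g 0, g 2), g 1)) (fun p _ => ![p.1.1, p.2, p.1.2])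
  · intro g hg
    simp only [mem_filter, mem_univ, true_and] at hg
    simp only [mem_product, mem_filter, mem_univ, and_true, true_and, emk]
    exact mem_filter.mpr ⟨mem_univ _, hg⟩
  · intro p hp
    simp only [mem_product, mem_filter, mem_univ, true_and] at hp
    simpa [emk] using hp.1
  · intro g _
    funext k
    fin_cases k <;> simp
  · intro p _
    simp

lemma cardA12 (W : Finset (Sym2 (Fin 3 × Fin d))) :
    (univ.filter (fun g : Fin 3 → Fin d =>
      s(((1 : Fin 3), g 1), ((2 : Fin 3), g 2)) ∈ W)).card =
    (univ.filter (fun p : Fin d × Fin d => emk 1 2 p ∈ W)).card * d := by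
  classical
  rw [show (univ.filter (fun p : Fin d × Fin d => emk 1 2 p ∈ W)).card * d =
      ((univ.filter (fun p : Fin d × Fin d => emk 1 2 p ∈ W)) ×ˢ (univ : Finset (Fin d))).card by
    rw [card_product, card_univ, Fintype.card_fin]]
  apply Finset.card_bij' (fun g _ => ((g 1, g 2), g 0)) (fun p _ => ![p.2, p.1.1, p.1.2])
  · intro g hg
    simp only [mem_filter, mem_univ, true_and] at hg
    simp only [mem_product, mem_filter, mem_univ, and_true, true_and, emk]
    exact mem_filter.mpr ⟨mem_univ _, hg⟩
  · intro p hp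
    simp only [mem_product, mem_filter, mem_univ, true_and] at hp
    simpa [emk] using hp.1
  · intro g _
    funext k
    fin_cases k <;> simp
  · intro p _
    simp

theorem statement19 (d : ℕ) (hd : 1 ≤ d) (W : Finset (Sym2 (Fin 3 × Fin d)))
    (hW : ∀ e ∈ W, e ∈ (tripartite d).edgeSet) (h2 : 2 * d ^ 2 ≤ W.card) :
    d * (W.card - 2 * d ^ 2) ≤
      (Finset.univ.filter (fun g : Fin 3 → Fin d =>
        s(((0 : Fin 3), g 0), ((1 : Fin 3), g 1)) ∈ W ∧
        s(((0 : Fin 3), g 0), ((2 : Fin 3), g 2)) ∈ W ∧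
        s(((1 : Fin 3), g 1), ((2 : Fin 3), g 2)) ∈ W)).card := by
  classical
  have e1 := cardA01 (d := d) W
  have e2 := cardA02 (d := d) W
  have e3 := cardA12 (d := d) W
  have esplit := split_card (d := d) W hW
  set A01 := univ.filter (fun g : Fin 3 → Fin d =>
    s(((0 : Fin 3), g 0), ((1 : Fin 3), g 1)) ∈ W) with hA01def
  set A02 := univ.filter (fun g : Fin 3 → Fin d =>
    s(((0 : Fin 3), g 0), ((2 : Fin 3), g 2)) ∈ W) with hA02def
  set A12 := univ.filter (fun g : Fin 3 → Fin d =>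
    s(((1 : Fin 3), g 1), ((2 : Fin 3), g 2)) ∈ W) with hA12def
  have hT : (Finset.univ.filter (fun g : Fin 3 → Fin d =>
        s(((0 : Fin 3), g 0), ((1 : Fin 3), g 1)) ∈ W ∧
        s(((0 : Fin 3), g 0), ((2 : Fin 3), g 2)) ∈ W ∧
        s(((1 : Fin 3), g 1), ((2 : Fin 3), g 2)) ∈ W)) = A01 ∩ A02 ∩ A12 := by
    ext g
    simp only [hA01def, hA02def, hA12def, mem_inter, mem_filter, mem_univ, true_and]
    tauto
  rw [hT]
  have hcardfun : Fintype.card (Fin 3 → Fin d) = d ^ 3 := by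
    simp [Fintype.card_fun]
  have hcompl : ((A01 ∩ A02 ∩ A12)ᶜ).card ≤ A01ᶜ.card + A02ᶜ.card + A12ᶜ.card := by
    rw [compl_inter, compl_inter]
    exact (card_union_le _ _).trans (Nat.add_le_add_right (card_union_le _ _) _)
  rw [card_compl, card_compl, card_compl, card_compl, hcardfun] at hcompl
  have hs1 : A01.card ≤ d ^ 3 := hcardfun ▸ card_le_univ A01
  have hs2 : A02.card ≤ d ^ 3 := hcardfun ▸ card_le_univ A02
  have hs3 : A12.card ≤ d ^ 3 := hcardfun ▸ card_le_univ A12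
  have hs4 : (A01 ∩ A02 ∩ A12).card ≤ d ^ 3 := hcardfun ▸ card_le_univ _
  have key : A01.card + A02.card + A12.card ≤ (A01 ∩ A02 ∩ A12).card + 2 * d ^ 3 := by
    set n := d ^ 3
    set c1 := A01.card
    set c2 := A02.card
    set c3 := A12.card
    set t := (A01 ∩ A02 ∩ A12).card
    omega
  obtain ⟨a, ha⟩ := Nat.exists_eq_add_of_le h2
  have h7 : W.card * d = 2 * d ^ 3 + a * d := by rw [ha]; ring
  have h6 : W.card * d ≤ (A01 ∩ A02 ∩ A12).card + 2 * d ^ 3 := by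
    calc W.card * d
        = A01.card + A02.card + A12.card := by rw [esplit, e1, e2, e3]; ring
      _ ≤ _ := key
  have h8 : a * d ≤ (A01 ∩ A02 ∩ A12).card := by
    rw [h7] at h6
    omega
  have h9 : W.card - 2 * d ^ 2 = a := by rw [ha]; exact Nat.add_sub_cancel_left ..
  rw [h9, mul_comm]
  exact h8


end PaperStmt
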